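/- In the backward-elimination argument: if S ⊇ MB(T) with MB(T) the Markov blanket of T, and S_ind = S \ MB(T) is nonempty, then for every X ∈ S_ind, T is conditionally independent of X given S \ {X}; hence backward elimination conditioning on all other selected variables removes some variable of S_ind at each step and terminates with exactly MB(T). -/
import Mathlib


variable {ι : Type*} [DecidableEq ι]

/-- One backward-elimination step with respect to a conditional-independence relation
`CI A Z`, read as "`T` is conditionally independent of the variables `A` given `Z`":
remove a variable of `S` that is conditionally independent of `T` given the rest of `S`. -/
def BackStep (CI : Finset ι → Finset ι → Prop) (S S' : Finset ι) : Prop :=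
  ∃ x ∈ S, CI {x} (S.erase x) ∧ S' = S.erase x

lemma ci_erase (CI : Finset ι → Finset ι → Prop) (t : ι) (MB : Finset ι)
    (hweakUnion : ∀ A B Z : Finset ι, CI (A ∪ B) Z → CI A (Z ∪ B))
    (hMB : ∀ X : Finset ι, Disjoint X MB → t ∉ X → CI X MB) :
    ∀ S : Finset ι, MB ⊆ S → t ∉ S → ∀ X ∈ S \ MB, CI {X} (S.erase X) := by
  intro S hsub ht X hX
  rw [Finset.mem_sdiff] at hX
  have hCI : CI (S \ MB) MB := hMB _ Finset.sdiff_disjoint (by simp [ht])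
  have hsplit : S \ MB = {X} ∪ (S \ MB).erase X := by
    ext a
    simp only [Finset.mem_union, Finset.mem_singleton, Finset.mem_erase, Finset.mem_sdiff]
    constructor
    · intro h
      by_cases e : a = X
      · exact Or.inl e
      · exact Or.inr ⟨e, h⟩
    · rintro (rfl | ⟨-, h⟩)
      · exact ⟨hX.1, hX.2⟩
      · exact h
  rw [hsplit] at hCI
  have := hweakUnion _ _ _ hCI
  have heq : MB ∪ (S \ MB).erase X = S.erase X := by
    ext a
    simp only [Finset.mem_union, Finset.mem_erase, Finset.mem_sdiff]
    constructor
    · rintro (h | ⟨hne, hS, hM⟩)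
      · exact ⟨fun e => hX.2 (e ▸ h), hsub h⟩
      · exact ⟨hne, hS⟩
    · rintro ⟨hne, hS⟩
      by_cases hM : a ∈ MB
      · exact Or.inl hM
      · exact Or.inr ⟨hne, hS, hM⟩
  rwa [heq] at this

/-- The backward-elimination argument: if `S ⊇ MB(T)` where `MB(T)` is a Markov blanket of
the target `T` (so that `T ⟂ X | MB` for every set `X` of variables disjoint from
`MB ∪ {T}`), the conditional-independence relation satisfies the weak union axiom, and (by
faithfulness) no member of `MB` is conditionally independent of `T` given any superset of
the rest of `MB`, then for every `X ∈ S \ MB`, `T ⟂ X | S \ {X}`; hence backward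
elimination, conditioning each time on all other selected variables, removes variables of
`S \ MB` and terminates with exactly `MB`. -/
theorem backward_elimination_yields_markov_blanket
    (CI : Finset ι → Finset ι → Prop) (t : ι) (MB S : Finset ι)
    (hweakUnion : ∀ A B Z : Finset ι, CI (A ∪ B) Z → CI A (Z ∪ B))
    (hMB : ∀ X : Finset ι, Disjoint X MB → t ∉ X → CI X MB)
    (hfaithful : ∀ x ∈ MB, ∀ Z : Finset ι, MB.erase x ⊆ Z → x ∉ Z → t ∉ Z → ¬ CI {x} Z)
    (hsub : MB ⊆ S) (ht : t ∉ S) (hne : (S \ MB).Nonempty) :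
    (∀ X ∈ S \ MB, CI {X} (S.erase X)) ∧
    Relation.ReflTransGen (BackStep CI) S MB ∧
    (∀ S', ¬ BackStep CI MB S') := by
  refine ⟨ci_erase CI t MB hweakUnion hMB S hsub ht, ?_, ?_⟩
  · -- induction on card of S \ MB
    clear hne
    have key : ∀ n : ℕ, ∀ S : Finset ι, (S \ MB).card = n → MB ⊆ S → t ∉ S →
        Relation.ReflTransGen (BackStep CI) S MB := by
      intro n
      induction n with
      | zero =>
        intro S hc hsub ht
        have : S = MB := by
          have : S \ MB = ∅ := Finset.card_eq_zero.mp hc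
          have hempty : S \ MB = ∅ := Finset.card_eq_zero.mp hc
          have h1 : S ⊆ MB := fun a ha => by
            by_contra hM
            have : a ∈ S \ MB := Finset.mem_sdiff.mpr ⟨ha, hM⟩
            rw [hempty] at this
            exact absurd this (Finset.notMem_empty a)
          exact Finset.Subset.antisymm h1 hsub
        rw [this]
      | succ n ih =>
        intro S hc hsub ht
        have hne' : (S \ MB).Nonempty := Finset.card_pos.mp (by omega)
        obtain ⟨X, hX⟩ := hne'
        have hXS := (Finset.mem_sdiff.mp hX).1
        have hXM := (Finset.mem_sdiff.mp hX).2
        have hstep : BackStep CI S (S.erase X) :=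
          ⟨X, hXS, ci_erase CI t MB hweakUnion hMB S hsub ht X hX, rfl⟩
        refine Relation.ReflTransGen.head hstep (ih (S.erase X) ?_ ?_ ?_)
        · have : (S.erase X) \ MB = (S \ MB).erase X := by
            ext a; simp only [Finset.mem_sdiff, Finset.mem_erase]; tauto
          rw [this, Finset.card_erase_of_mem hX, hc]
          omega
        · intro a ha
          exact Finset.mem_erase.mpr ⟨fun e => hXM (e ▸ ha), hsub ha⟩
        · exact fun h => ht (Finset.mem_of_mem_erase h)
    exact key _ S rfl hsub ht
  · rintro S' ⟨x, hx, hCI, -⟩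
    exact hfaithful x hx (MB.erase x) (le_refl _) (Finset.notMem_erase x MB)
      (fun h => ht (hsub (Finset.mem_of_mem_erase h))) hCI
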